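/- arXiv:1910.11991 — 3 statements merged into one kernel-verified Lean document; each statement's English description precedes it below -/
import Mathlib

section
/- Under the setup of the previous statement (full logistic model P(Y=1|σ(X)) = expit(β₀ᵀX) a.s., bounded Z = ζ(X), θ₀ solving E[(Y − expit(θ₀ᵀZ))Z] = 0, and selection indicator R with E[R | σ(Y,X)] = π(Y, s(X)) a.s., π taking values in (0,1]), the influence function Ψ₁ := R·f(X, Z; β₀, θ₀)/π(Y, s(X)) + (Y − expit(θ₀ᵀZ)) Z, where f(x,z;β,θ) = (expit(βᵀx) − expit(θᵀz)) z, has mean zero: E[Ψ₁] = 0. -/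
/-!
Conditioning on `σ(Y, X)`, where `E[R | Y, X] = π(Y, s(X))`, the inverse-probability weight
cancels: `E[R f / π] = E[f]`. Conditioning on `σ(X)`, the correctly specified full model lets
`Y` replace `expit(β₀ᵀX)` in `E[f]`, so `E[f] = E[(Y − expit(θ₀ᵀZ)) Z]`, which vanishes by the
choice of `θ₀`. Hence both terms of `Ψ₁` have mean zero.
-/

open MeasureTheory

noncomputable def expit (t : ℝ) : ℝ := Real.exp t / (1 + Real.exp t)

theorem expit_eq_sigmoid : expit = Real.sigmoid := by
  funext t
  rw [expit, Real.sigmoid_def, Real.exp_neg]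
  field_simp
  ring

theorem measurable_expit : Measurable expit :=
  expit_eq_sigmoid ▸ continuous_sigmoid.measurable

theorem integrable_expit_comp {Ω : Type*} [MeasurableSpace Ω] {μ : Measure Ω} [IsFiniteMeasure μ]
    {f : Ω → ℝ} (hf : Measurable f) : Integrable (fun ω => expit (f ω)) μ :=
  Integrable.of_bound (measurable_expit.comp hf).aestronglyMeasurable 1 <| ae_of_all _ fun ω => by
    rw [expit_eq_sigmoid, Real.norm_eq_abs, abs_le]
    exact ⟨by linarith [Real.sigmoid_pos (f ω)], Real.sigmoid_le_one _⟩

theorem integrable_of_forall_eq_zero_or_eq_one {Ω : Type*} [MeasurableSpace Ω] {μ : Measure Ω}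
    [IsFiniteMeasure μ] {f : Ω → ℝ} (hf : Measurable f) (h01 : ∀ ω, f ω = 0 ∨ f ω = 1) :
    Integrable f μ :=
  Integrable.of_bound hf.aestronglyMeasurable 1 <| ae_of_all _ fun ω => by
    rcases h01 ω with h | h <;> simp [h]

section CondExp

variable {Ω : Type*} {m m' m₀ : MeasurableSpace Ω} {μ : Measure[m₀] Ω}

theorem integral_mul_condExp (hm : m ≤ m₀) [SigmaFinite (μ.trim hm)] {f g : Ω → ℝ}
    (hf : Measurable[m] f) (hfg : Integrable (f * g) μ) (hg : Integrable g μ) :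
    ∫ ω, f ω * (μ[g|m]) ω ∂μ = ∫ ω, f ω * g ω ∂μ :=
  (integral_congr_ae
    (condExp_mul_of_stronglyMeasurable_left hf.stronglyMeasurable hfg hg).symm).trans
      (integral_condExp hm)

theorem integral_mul_div_eq_of_condExp_eq (hm : m ≤ m₀) [SigmaFinite (μ.trim hm)]
    {R h p : Ω → ℝ} (hR : Integrable R μ) (hh : Measurable[m] h) (hp : Measurable[m] p)
    (hp₀ : ∀ᵐ ω ∂μ, p ω ≠ 0) (hRp : μ[R|m] =ᵐ[μ] p)
    (hint : Integrable (fun ω => R ω * h ω / p ω) μ) :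
    ∫ ω, R ω * h ω / p ω ∂μ = ∫ ω, h ω ∂μ := by
  have hint' : Integrable ((h / p) * R) μ := hint.congr (ae_of_all _ fun ω => by
    simp only [Pi.mul_apply, Pi.div_apply]; ring)
  calc ∫ ω, R ω * h ω / p ω ∂μ = ∫ ω, (h / p) ω * R ω ∂μ := by
        congr 1; funext ω; simp only [Pi.div_apply]; ring
    _ = ∫ ω, (h / p) ω * (μ[R|m]) ω ∂μ := (integral_mul_condExp hm (hh.div hp) hint' hR).symm
    _ = ∫ ω, h ω ∂μ := integral_congr_ae <| by
        filter_upwards [hp₀, hRp] with ω hω hωR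
        rw [hωR, Pi.div_apply, div_mul_cancel₀ _ hω]

theorem integral_ipw_add_residual_eq_zero [IsFiniteMeasure μ]
    (hm : m ≤ m') (hm' : m' ≤ m₀) {Y R Z e e' p : Ω → ℝ} {C : ℝ}
    (hY : Integrable Y μ) (hR : Integrable R μ) (he : Integrable e μ) (he' : Integrable e' μ)
    (hZ : Measurable[m] Z) (hZC : ∀ᵐ ω ∂μ, |Z ω| ≤ C)
    (hem : Measurable[m] e) (hem' : Measurable[m] e') (hp : Measurable[m'] p)
    (hp₀ : ∀ᵐ ω ∂μ, p ω ≠ 0) (hYe : μ[Y|m] =ᵐ[μ] e) (hRp : μ[R|m'] =ᵐ[μ] p)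
    (hres : ∫ ω, (Y ω - e' ω) * Z ω ∂μ = 0) :
    ∫ ω, (R ω * ((e ω - e' ω) * Z ω) / p ω + (Y ω - e' ω) * Z ω) ∂μ = 0 := by
  have hmm₀ := hm.trans hm'
  have hZa : AEStronglyMeasurable Z μ := (hZ.mono hmm₀ le_rfl).aestronglyMeasurable
  have hZC' : ∀ᵐ ω ∂μ, ‖Z ω‖ ≤ C := by simpa only [Real.norm_eq_abs] using hZC
  have hB : Integrable (fun ω => (Y ω - e' ω) * Z ω) μ := (hY.sub he').mul_bdd hZa hZC'
  have hZY : Integrable (fun ω => Z ω * Y ω) μ := hY.bdd_mul hZa hZC'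
  have hZe : Integrable (fun ω => Z ω * e ω) μ := he.bdd_mul hZa hZC'
  have hmodel : ∫ ω, Z ω * e ω ∂μ = ∫ ω, Z ω * Y ω ∂μ := by
    rw [← integral_mul_condExp hmm₀ hZ hZY hY]
    exact integral_congr_ae (hYe.mono fun ω hω => congrArg (Z ω * ·) hω.symm)
  have hg : ∫ ω, (e ω - e' ω) * Z ω ∂μ = 0 := by
    calc ∫ ω, (e ω - e' ω) * Z ω ∂μ
        = ∫ ω, ((Y ω - e' ω) * Z ω + (Z ω * e ω - Z ω * Y ω)) ∂μ := by
          congr 1; funext ω; ring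
      _ = ∫ ω, (Y ω - e' ω) * Z ω ∂μ + ∫ ω, (Z ω * e ω - Z ω * Y ω) ∂μ :=
          integral_add hB (hZe.sub hZY)
      _ = 0 := by rw [integral_sub hZe hZY, hmodel, hres, sub_self, add_zero]
  -- `p` is not bounded away from `0`, so `Ψ₁` need not be integrable; then both sides are `0`.
  by_cases hI : Integrable (fun ω => R ω * ((e ω - e' ω) * Z ω) / p ω + (Y ω - e' ω) * Z ω) μ
  · have hA := (hI.sub hB).congr (ae_of_all _ fun ω => add_sub_cancel_right _ _)
    rw [integral_add hA hB, integral_mul_div_eq_of_condExp_eq (h := fun ω => (e ω - e' ω) * Z ω)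
      hm' hR (((hem.sub hem').mul hZ).mono hm le_rfl) hp hp₀ hRp hA, hg, hres, add_zero]
  · exact integral_undef hI

end CondExp

/-- The influence function of the first block of the stacked GMM estimating
function, `Ψ₁ = R·f(X, Z; β₀, θ₀)/π(Y, s(X)) + (Y − expit(θ₀ᵀZ)) Z`, has mean zero,
where `f(x, z; β, θ) = (expit(βᵀx) − expit(θᵀz)) z`. -/
theorem stmt4 {Ω : Type*} [MeasurableSpace Ω] (μ : Measure Ω) [IsProbabilityMeasure μ]
    {q q₁ : ℕ} {𝒮 : Type*} [MeasurableSpace 𝒮]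
    (X : Ω → (Fin q → ℝ)) (Y R : Ω → ℝ) (β₀ : Fin q → ℝ)
    (hX : Measurable X) (hY : Measurable Y) (hR : Measurable R)
    (hY01 : ∀ ω, Y ω = 0 ∨ Y ω = 1) (hR01 : ∀ ω, R ω = 0 ∨ R ω = 1)
    (hmodel : μ[Y | MeasurableSpace.comap X inferInstance] =ᵐ[μ]
      fun ω => expit (∑ i, β₀ i * X ω i))
    (ζ : (Fin q → ℝ) → (Fin q₁ → ℝ)) (hζm : Measurable ζ)
    (Mζ : ℝ) (hζb : ∀ x i, |ζ x i| ≤ Mζ)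
    (θ₀ : Fin q₁ → ℝ)
    (hθ₀ : ∀ j, ∫ ω, (Y ω - expit (∑ i, θ₀ i * ζ (X ω) i)) * ζ (X ω) j ∂μ = 0)
    (s : (Fin q → ℝ) → 𝒮) (hs : Measurable s)
    (π : ℝ → 𝒮 → ℝ) (hπ : Measurable fun p : ℝ × 𝒮 => π p.1 p.2)
    (hπrange : ∀ y ∈ ({0, 1} : Set ℝ), ∀ st, π y st ∈ Set.Ioc (0 : ℝ) 1)
    (hsel : μ[R | MeasurableSpace.comap (fun ω => (Y ω, X ω)) inferInstance] =ᵐ[μ]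
      fun ω => π (Y ω) (s (X ω))) :
    ∀ j, ∫ ω,
      (R ω * ((expit (∑ i, β₀ i * X ω i) - expit (∑ i, θ₀ i * ζ (X ω) i)) * ζ (X ω) j) /
          π (Y ω) (s (X ω)) +
        (Y ω - expit (∑ i, θ₀ i * ζ (X ω) i)) * ζ (X ω) j) ∂μ = 0 := by
  intro j
  have hXσ : Measurable[MeasurableSpace.comap (fun ω => (Y ω, X ω)) inferInstance] X :=
    measurable_snd.comp (comap_measurable _)
  have hexpit : ∀ {n} (γ : Fin n → ℝ) {F : (Fin q → ℝ) → Fin n → ℝ}, Measurable F →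
      Measurable[MeasurableSpace.comap X inferInstance]
        fun ω => expit (∑ i, γ i * F (X ω) i) := fun γ F hF =>
    (measurable_expit.comp (f := fun x => ∑ i, γ i * F x i) (by fun_prop)).comp
      (comap_measurable X)
  exact integral_ipw_add_residual_eq_zero hXσ.comap_le (hY.prodMk hX).comap_le
    (integrable_of_forall_eq_zero_or_eq_one hY hY01)
    (integrable_of_forall_eq_zero_or_eq_one hR hR01)
    (integrable_expit_comp (by fun_prop)) (integrable_expit_comp (by fun_prop))
    (((measurable_pi_apply j).comp hζm).comp (comap_measurable X)) (ae_of_all _ fun ω => hζb _ j)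
    (hexpit β₀ measurable_id) (hexpit θ₀ hζm)
    (hπ.comp ((measurable_fst.prodMk (hs.comp measurable_snd)).comp (comap_measurable _)))
    (ae_of_all _ fun ω => (hπrange _ (hY01 ω) _).1.ne') hmodel hsel (hθ₀ j)
end

section
/- Let (Ω, ℱ, P) be a probability space, X : Ω → ℝ^q a random vector taking values in a countable set, Y : Ω → {0,1}, s : ℝ^q → 𝒮 a map, π : {0,1} × 𝒮 → (0,1], and R : Ω → {0,1} a selection indicator such that P(R = 1 | Y = y, X = x) = π(y, s(x)) for all (y,x) with P(Y = y, X = x) > 0. Suppose P(Y = 1 | X = x) = expit(β₀ᵀx) whenever P(X = x) > 0. Then for every x with P(X = x, R = 1) > 0, P(Y = 1 | X = x, R = 1) = expit( β₀ᵀx + log( π(1, s(x)) / π(0, s(x)) ) ). -/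
/-!
Fix `x` and write `a = P(Y = 1, X = x)`, `b = P(Y = 0, X = x)`. The logistic model says exactly
that the odds are `a / b = exp (β₀ᵀx)`. Splitting `{X = x, R = 1}` according to `Y`, the selection
probabilities give `P(Y = y, X = x, R = 1) = π(y, s x) · P(Y = y, X = x)`, so the odds among the
selected subjects are `exp (β₀ᵀx) · π(1, s x) / π(0, s x)`, which is the logistic model again with
intercept shifted by `log (π(1, s x) / π(0, s x))`.
-/

open MeasureTheory

open Set

section

open Real

theorem eq_expit_mul_add_iff {a b t : ℝ} : a = expit t * (a + b) ↔ a = exp t * b := by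
  have h : 0 < 1 + exp t := by positivity
  rw [expit, div_mul_eq_mul_div, eq_div_iff h.ne']
  constructor <;> intro h <;> linear_combination h

theorem mul_eq_expit_add_log_div_mul_add {a b t p₀ p₁ : ℝ} (hp₀ : 0 < p₀) (hp₁ : 0 < p₁)
    (h : a = expit t * (a + b)) :
    p₁ * a = expit (t + log (p₁ / p₀)) * (p₁ * a + p₀ * b) := by
  rw [eq_expit_mul_add_iff] at h ⊢
  rw [exp_add, exp_log (div_pos hp₁ hp₀), h]
  field_simp

end

section

variable {Ω : Type*} [MeasurableSpace Ω] {μ : Measure Ω}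

theorem measureReal_inter_eq_mul_of_ne_zero {s t : Set Ω} {c : ℝ}
    (h : μ t ≠ 0 → μ.real (s ∩ t) = c * μ.real t) : μ.real (s ∩ t) = c * μ.real t := by
  by_cases ht : μ t = 0
  · simp [measureReal_def, ht, measure_mono_null inter_subset_right ht]
  · exact h ht

theorem measureReal_eq_add_of_eq_zero_or_eq_one [IsFiniteMeasure μ] {Y : Ω → ℝ}
    (hY : Measurable Y) (hY01 : ∀ ω, Y ω = 0 ∨ Y ω = 1) (E : Set Ω) :
    μ.real E = μ.real ({ω | Y ω = 1} ∩ E) + μ.real ({ω | Y ω = 0} ∩ E) := by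
  have hone : MeasurableSet {ω | Y ω = 1} := hY (measurableSet_singleton 1)
  have hcompl : E \ {ω | Y ω = 1} = {ω | Y ω = 0} ∩ E := by
    ext ω
    rcases hY01 ω with h | h <;> simp [h, and_comm]
  rw [← measureReal_inter_add_sdiff hone, inter_comm, hcompl]

end

theorem stmt6_general {Ω : Type*} [MeasurableSpace Ω] (μ : Measure Ω) [IsProbabilityMeasure μ]
    {q : ℕ} {𝒮 : Type*}
    (X : Ω → (Fin q → ℝ)) (Y R : Ω → ℝ) (s : (Fin q → ℝ) → 𝒮)
    (π : ℝ → 𝒮 → ℝ) (β₀ : Fin q → ℝ)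
    (hY : Measurable Y)
    (hY01 : ∀ ω, Y ω = 0 ∨ Y ω = 1)
    (hπrange : ∀ y ∈ ({0, 1} : Set ℝ), ∀ st, π y st ∈ Set.Ioc (0 : ℝ) 1)
    (hsel : ∀ y ∈ ({0, 1} : Set ℝ), ∀ x, μ {ω | Y ω = y ∧ X ω = x} ≠ 0 →
      (μ ({ω | R ω = 1} ∩ {ω | Y ω = y ∧ X ω = x})).toReal =
        π y (s x) * (μ {ω | Y ω = y ∧ X ω = x}).toReal)
    (hmodel : ∀ x, μ {ω | X ω = x} ≠ 0 →
      (μ ({ω | Y ω = 1} ∩ {ω | X ω = x})).toReal =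
        expit (∑ i, β₀ i * x i) * (μ {ω | X ω = x}).toReal) :
    ∀ x, μ ({ω | X ω = x} ∩ {ω | R ω = 1}) ≠ 0 →
      (μ ({ω | Y ω = 1} ∩ ({ω | X ω = x} ∩ {ω | R ω = 1}))).toReal =
        expit ((∑ i, β₀ i * x i) + Real.log (π 1 (s x) / π 0 (s x))) *
          (μ ({ω | X ω = x} ∩ {ω | R ω = 1})).toReal := by
  intro x hx
  obtain ⟨hπ₀, -⟩ := hπrange 0 (by simp) (s x)
  obtain ⟨hπ₁, -⟩ := hπrange 1 (by simp) (s x)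
  have hsplit := measureReal_eq_add_of_eq_zero_or_eq_one (μ := μ) hY hY01
  have hselected (y : ℝ) (hy : y ∈ ({0, 1} : Set ℝ)) :
      μ.real ({ω | Y ω = y} ∩ ({ω | X ω = x} ∩ {ω | R ω = 1})) =
        π y (s x) * μ.real ({ω | Y ω = y} ∩ {ω | X ω = x}) := by
    rw [← inter_assoc, inter_comm]
    exact measureReal_inter_eq_mul_of_ne_zero (hsel y hy x)
  have hpopulation : μ.real ({ω | Y ω = 1} ∩ {ω | X ω = x}) =
      expit (∑ i, β₀ i * x i) *
        (μ.real ({ω | Y ω = 1} ∩ {ω | X ω = x}) + μ.real ({ω | Y ω = 0} ∩ {ω | X ω = x})) := by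
    rw [← hsplit]
    exact hmodel x fun h ↦ hx (measure_mono_null inter_subset_left h)
  simp only [← measureReal_def]
  rw [hsplit ({ω | X ω = x} ∩ {ω | R ω = 1}), hselected 1 (by simp), hselected 0 (by simp)]
  exact mul_eq_expit_add_log_div_mul_add hπ₀ hπ₁ hpopulation

/-- Under outcome- and stratum-dependent selection
`P(R = 1 | Y = y, X = x) = π(y, s(x))` and the population logistic model
`P(Y = 1 | X = x) = expit(β₀ᵀx)`, the disease model among the selected subjects is again
logistic with intercept shifted by the offset `log(π(1, s(x))/π(0, s(x)))`:
`P(Y = 1 | X = x, R = 1) = expit(β₀ᵀx + log(π(1, s(x))/π(0, s(x))))`.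
Conditional probabilities are written out as ratio-free identities between measures. -/
theorem stmt6 {Ω : Type*} [MeasurableSpace Ω] (μ : Measure Ω) [IsProbabilityMeasure μ]
    {q : ℕ} {𝒮 : Type*}
    (X : Ω → (Fin q → ℝ)) (Y R : Ω → ℝ) (s : (Fin q → ℝ) → 𝒮)
    (π : ℝ → 𝒮 → ℝ) (β₀ : Fin q → ℝ)
    (hX : Measurable X) (hY : Measurable Y) (hR : Measurable R)
    (hcount : (Set.range X).Countable)
    (hY01 : ∀ ω, Y ω = 0 ∨ Y ω = 1) (hR01 : ∀ ω, R ω = 0 ∨ R ω = 1)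
    (hπrange : ∀ y ∈ ({0, 1} : Set ℝ), ∀ st, π y st ∈ Set.Ioc (0 : ℝ) 1)
    (hsel : ∀ y ∈ ({0, 1} : Set ℝ), ∀ x, μ {ω | Y ω = y ∧ X ω = x} ≠ 0 →
      (μ ({ω | R ω = 1} ∩ {ω | Y ω = y ∧ X ω = x})).toReal =
        π y (s x) * (μ {ω | Y ω = y ∧ X ω = x}).toReal)
    (hmodel : ∀ x, μ {ω | X ω = x} ≠ 0 →
      (μ ({ω | Y ω = 1} ∩ {ω | X ω = x})).toReal =
        expit (∑ i, β₀ i * x i) * (μ {ω | X ω = x}).toReal) :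
    ∀ x, μ ({ω | X ω = x} ∩ {ω | R ω = 1}) ≠ 0 →
      (μ ({ω | Y ω = 1} ∩ ({ω | X ω = x} ∩ {ω | R ω = 1}))).toReal =
        expit ((∑ i, β₀ i * x i) + Real.log (π 1 (s x) / π 0 (s x))) *
          (μ ({ω | X ω = x} ∩ {ω | R ω = 1})).toReal :=
  stmt6_general μ X Y R s π β₀ hY hY01 hπrange hsel hmodel
end

section
/- Let V be an m×m real symmetric positive definite matrix, Γ an m×q real matrix of full column rank q, and C an m×m real symmetric positive semidefinite matrix such that ΓᵀCΓ is invertible. Then the matrix (ΓᵀCΓ)⁻¹ ΓᵀC V C Γ (ΓᵀCΓ)⁻¹ − (Γᵀ V⁻¹ Γ)⁻¹ is positive semidefinite. -/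
/-! For `W = Γᴴ V⁻¹ Γ` and any `A` with `Aᴴ Γ = 1`, the cross terms of
`(A - V⁻¹ Γ W⁻¹)ᴴ V (A - V⁻¹ Γ W⁻¹)` both equal `W⁻¹`, so `Aᴴ V A - W⁻¹` is this positive
semidefinite matrix (the Gauss–Markov argument). The sandwich variance with weight `C` is
`Aᴴ V A` for `A = C Γ (Γᴴ C Γ)⁻¹`, and `Aᴴ Γ = 1` exactly because `C` is symmetric. -/

open Matrix
open scoped ComplexOrder

namespace Matrix

variable {𝕜 m n : Type*} [RCLike 𝕜] [Fintype m] [Fintype n] [DecidableEq m] [DecidableEq n]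

omit [DecidableEq m] in
lemma mulVec_injective_of_mul_eq_one {A : Matrix n m 𝕜} {Γ : Matrix m n 𝕜} (h : A * Γ = 1) :
    Function.Injective Γ.mulVec := fun x y hxy => by
  simpa [mulVec_mulVec, h] using congrArg (A *ᵥ ·) hxy

lemma conjTranspose_mul_mul_sub_inv_eq {V : Matrix m m 𝕜} (hV : V.IsHermitian)
    (hVdet : IsUnit V.det) {Γ A : Matrix m n 𝕜} (hW : IsUnit (Γᴴ * V⁻¹ * Γ).det)
    (hA : Aᴴ * Γ = 1) :
    Aᴴ * V * A - (Γᴴ * V⁻¹ * Γ)⁻¹ =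
      (A - V⁻¹ * Γ * (Γᴴ * V⁻¹ * Γ)⁻¹)ᴴ * V * (A - V⁻¹ * Γ * (Γᴴ * V⁻¹ * Γ)⁻¹) := by
  set W := Γᴴ * V⁻¹ * Γ
  set B := V⁻¹ * Γ * W⁻¹
  have hWinv : W⁻¹ᴴ = W⁻¹ := (isHermitian_conjTranspose_mul_mul Γ hV.inv).inv
  have hVB : V * B = Γ * W⁻¹ := by
    simp only [B, ← Matrix.mul_assoc, mul_nonsing_inv V hVdet, Matrix.one_mul]
  have hBV : Bᴴ * V = W⁻¹ * Γᴴ := by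
    simpa only [conjTranspose_mul, hV.eq, hWinv] using congrArg conjTranspose hVB
  have hΓA : Γᴴ * A = 1 := by simpa using congrArg conjTranspose hA
  have hΓB : Γᴴ * B = 1 := by
    simp only [B, ← Matrix.mul_assoc]; exact mul_nonsing_inv W hW
  calc Aᴴ * V * A - W⁻¹ = Aᴴ * V * A - Aᴴ * (V * B) - Bᴴ * V * A + Bᴴ * V * B := by
        rw [hVB, hBV, ← Matrix.mul_assoc, hA]
        simp only [Matrix.mul_assoc, hΓA, hΓB, Matrix.one_mul, Matrix.mul_one]
        abel
    _ = (A - B)ᴴ * V * (A - B) := by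
        simp only [conjTranspose_sub, Matrix.sub_mul, Matrix.mul_sub, Matrix.mul_assoc]; abel

lemma PosDef.posSemidef_conjTranspose_mul_mul_sub_inv {V : Matrix m m 𝕜} (hV : V.PosDef)
    {Γ A : Matrix m n 𝕜} (hA : Aᴴ * Γ = 1) :
    (Aᴴ * V * A - (Γᴴ * V⁻¹ * Γ)⁻¹).PosSemidef := by
  have hW : (Γᴴ * V⁻¹ * Γ).PosDef :=
    hV.inv.conjTranspose_mul_mul_same (mulVec_injective_of_mul_eq_one hA)
  rw [conjTranspose_mul_mul_sub_inv_eq hV.1 ((isUnit_iff_isUnit_det _).1 hV.isUnit)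
    ((isUnit_iff_isUnit_det _).1 hW.isUnit) hA]
  exact hV.posSemidef.conjTranspose_mul_mul_same _

omit [DecidableEq m] in
lemma conjTranspose_mul_mul_inv_conjTranspose_mul_mul {C : Matrix m m 𝕜} (hC : C.IsHermitian)
    (Γ : Matrix m n 𝕜) :
    (C * Γ * (Γᴴ * C * Γ)⁻¹)ᴴ = (Γᴴ * C * Γ)⁻¹ * Γᴴ * C := by
  rw [conjTranspose_mul, conjTranspose_mul, (isHermitian_conjTranspose_mul_mul Γ hC).inv.eq,
    hC.eq, ← Matrix.mul_assoc]

end Matrix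

theorem stmt8_general {m q : ℕ} (V : Matrix (Fin m) (Fin m) ℝ) (hV : V.PosDef)
    (Γ : Matrix (Fin m) (Fin q) ℝ)
    (C : Matrix (Fin m) (Fin m) ℝ) (hC : C.PosSemidef)
    (hinv : IsUnit (Γᵀ * C * Γ).det) :
    ((Γᵀ * C * Γ)⁻¹ * (Γᵀ * C * V * C * Γ) * (Γᵀ * C * Γ)⁻¹ -
      (Γᵀ * V⁻¹ * Γ)⁻¹).PosSemidef := by
  have hA := conjTranspose_mul_mul_inv_conjTranspose_mul_mul hC.1 Γ
  have hAΓ : (C * Γ * (Γᴴ * C * Γ)⁻¹)ᴴ * Γ = 1 := by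
    rw [hA]
    simpa only [Matrix.mul_assoc] using
      nonsing_inv_mul (Γᴴ * C * Γ) (by rwa [conjTranspose_eq_transpose_of_trivial])
  have hmin := hV.posSemidef_conjTranspose_mul_mul_sub_inv hAΓ
  rw [hA] at hmin
  simpa only [conjTranspose_eq_transpose_of_trivial, Matrix.mul_assoc] using hmin

/-- Optimality of the GMM weight matrix in the Loewner order: for symmetric
positive definite `V`, full column rank `Γ`, and symmetric positive semidefinite `C` with
`ΓᵀCΓ` invertible, the sandwich variance with weight `C` dominates `(ΓᵀV⁻¹Γ)⁻¹`:
`(ΓᵀCΓ)⁻¹ ΓᵀC V C Γ (ΓᵀCΓ)⁻¹ − (ΓᵀV⁻¹Γ)⁻¹` is positive semidefinite. -/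
theorem stmt8 {m q : ℕ} (V : Matrix (Fin m) (Fin m) ℝ) (hV : V.PosDef)
    (Γ : Matrix (Fin m) (Fin q) ℝ) (hΓ : Γ.rank = q)
    (C : Matrix (Fin m) (Fin m) ℝ) (hC : C.PosSemidef)
    (hinv : IsUnit (Γᵀ * C * Γ).det) :
    ((Γᵀ * C * Γ)⁻¹ * (Γᵀ * C * V * C * Γ) * (Γᵀ * C * Γ)⁻¹ -
      (Γᵀ * V⁻¹ * Γ)⁻¹).PosSemidef :=
  stmt8_general V hV Γ C hC hinv
end
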